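/- arXiv:1604.08813 — 8 statements merged into one kernel-verified Lean document; each statement's English description precedes it below -/
import Mathlib

section
/- Let V be a quantale and (X, c) a V-closure space, i.e., c : PX → V^X satisfies (R') k ≤ c({x})(x) for all x, and (T') for all collections 𝒜 of subsets of X, all B ⊆ X and z ∈ X: (⨅_{y ∈ B} ⨆_{A ∈ 𝒜} (cA)(y)) ⊗ (cB)(z) ≤ c(⋃𝒜)(z). Define c^v A = {x ∈ X | (cA)(x) ≥ v}. Then the family (c^v)_{v ∈ V} satisfies: (C0) B ⊆ A implies c^v B ⊆ c^v A; (C1) if v ≤ ⨆_{i∈I} u_i then ⋂_{i∈I} c^{u_i} A ⊆ c^v A; (C2) A ⊆ c^k A; (C3) c^u(c^v A) ⊆ c^{v⊗u} A. -/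
/-- A `V`-closure space structure: `c : PX → V^X` satisfying reflexivity (R') and
transitivity (T'). -/
def IsVCls {V : Type*} [CompleteLattice V] [Monoid V] (X : Type*)
    (c : Set X → X → V) : Prop :=
  (∀ x : X, (1 : V) ≤ c {x} x) ∧
  ∀ (𝒜 : Set (Set X)) (B : Set X) (z : X),
    (⨅ y ∈ B, ⨆ A ∈ 𝒜, c A y) * c B z ≤ c (⋃₀ 𝒜) z

theorem cls_mono {V : Type*} [CompleteLattice V] [Monoid V] [IsQuantale V]
    {X : Type*} (c : Set X → X → V) (hc : IsVCls X c)
    {A B : Set X} (hBA : B ⊆ A) (z : X) : c B z ≤ c A z := by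
  obtain ⟨hR, hT⟩ := hc
  have h := hT ((fun a => {a}) '' A) B z
  have hU : ⋃₀ ((fun a => {a}) '' A) = A := by
    ext x; simp
  rw [hU] at h
  have h1 : (1 : V) ≤ ⨅ y ∈ B, ⨆ S ∈ (fun a => ({a} : Set X)) '' A, c S y := by
    refine le_iInf fun y => le_iInf fun hy => ?_
    exact le_trans (hR y) (le_iSup₂_of_le {y} ⟨y, hBA hy, rfl⟩ le_rfl)
  calc c B z = 1 * c B z := (one_mul _).symm
    _ ≤ (⨅ y ∈ B, ⨆ S ∈ (fun a => ({a} : Set X)) '' A, c S y) * c B z :=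
        mul_le_mul_left h1 _
    _ ≤ c A z := h

/-- The closure tower `c^v A = {x | v ≤ (cA)(x)}` of a `V`-closure space
satisfies (C0)-(C3). -/
theorem closure_tower_of_VCls {V : Type*} [CompleteLattice V] [Monoid V] [IsQuantale V]
    {X : Type*} (c : Set X → X → V) (hc : IsVCls X c) :
    (∀ (v : V) (A B : Set X), B ⊆ A →
      {x | v ≤ c B x} ⊆ {x | v ≤ c A x}) ∧
    (∀ (v : V) (U : Set V) (A : Set X), v ≤ sSup U →
      (⋂ u ∈ U, {x | u ≤ c A x}) ⊆ {x | v ≤ c A x}) ∧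
    (∀ A : Set X, A ⊆ {x | (1 : V) ≤ c A x}) ∧
    (∀ (u v : V) (A : Set X),
      {x | u ≤ c {y | v ≤ c A y} x} ⊆ {x | v * u ≤ c A x}) := by
  obtain ⟨hR, hT⟩ := hc
  refine ⟨fun v A B hBA x hx => ?_, fun v U A hv x hx => ?_, fun A x hx => ?_,
    fun u v A x hx => ?_⟩
  · exact le_trans hx (cls_mono c ⟨hR, hT⟩ hBA x)
  · simp only [Set.mem_iInter, Set.mem_setOf_eq] at hx ⊢
    exact le_trans hv (sSup_le fun u hu => hx u hu)
  · have := cls_mono c ⟨hR, hT⟩ (Set.singleton_subset_iff.mpr hx) x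
    exact le_trans (hR x) this
  · simp only [Set.mem_setOf_eq] at hx ⊢
    set B := {y | v ≤ c A y}
    have h := hT {A} B x
    rw [Set.sUnion_singleton] at h
    have h1 : v ≤ ⨅ y ∈ B, ⨆ S ∈ ({A} : Set (Set X)), c S y := by
      refine le_iInf fun y => le_iInf fun hy => ?_
      exact le_trans hy (le_iSup₂_of_le A rfl le_rfl)
    exact le_trans (mul_le_mul' h1 hx) h
end

section
/- Let V be a quantale and (c^v : PX → PX)_{v ∈ V} a family of maps satisfying (C0) B ⊆ A implies c^v B ⊆ c^v A, (C1) v ≤ ⨆_i u_i implies ⋂_i c^{u_i} A ⊆ c^v A, (C2) A ⊆ c^k A, and (C3) c^u c^v A ⊆ c^{v⊗u} A. Then the map c : PX → V^X defined by (cA)(x) = ⨆{v ∈ V | x ∈ c^v A} satisfies: (R') k ≤ c({x})(x) for all x ∈ X, and (T') for every collection 𝒜 of subsets of X, every B ⊆ X and z ∈ X, (⨅_{y ∈ B} ⨆_{A ∈ 𝒜} (cA)(y)) ⊗ (cB)(z) ≤ c(⋃𝒜)(z). -/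
/-- A family `(c^v : PX → PX)` satisfying (C0)-(C3) induces a `V`-closure
space structure via `(cA)(x) = ⨆{v | x ∈ c^v A}`, i.e. (R') and (T') hold. -/
theorem VCls_of_closure_tower {V : Type*} [CompleteLattice V] [Monoid V] [IsQuantale V]
    {X : Type*} (t : V → Set X → Set X)
    (hC0 : ∀ (v : V) (A B : Set X), B ⊆ A → t v B ⊆ t v A)
    (hC1 : ∀ (v : V) (U : Set V) (A : Set X), v ≤ sSup U → (⋂ u ∈ U, t u A) ⊆ t v A)
    (hC2 : ∀ A : Set X, A ⊆ t 1 A)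
    (hC3 : ∀ (u v : V) (A : Set X), t u (t v A) ⊆ t (v * u) A) :
    (∀ x : X, (1 : V) ≤ sSup {v | x ∈ t v {x}}) ∧
    ∀ (𝒜 : Set (Set X)) (B : Set X) (z : X),
      (⨅ y ∈ B, ⨆ A ∈ 𝒜, sSup {v | y ∈ t v A}) * sSup {v | z ∈ t v B} ≤
        sSup {v | z ∈ t v (⋃₀ 𝒜)} := by
  -- The sup is "attained": x ∈ t (sSup {v | x ∈ t v A}) A
  have attain : ∀ (A : Set X) (x : X), x ∈ t (sSup {v | x ∈ t v A}) A := by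
    intro A x
    apply hC1 _ {v | x ∈ t v A} A le_rfl
    exact Set.mem_iInter₂.2 fun u hu => hu
  constructor
  · intro x
    exact le_sSup (hC2 {x} rfl)
  · intro 𝒜 B z
    set w := ⨅ y ∈ B, ⨆ A ∈ 𝒜, sSup {v | y ∈ t v A} with hw
    set u := sSup {v | z ∈ t v B} with hu
    -- B ⊆ t w (⋃₀ 𝒜)
    have hB : B ⊆ t w (⋃₀ 𝒜) := by
      intro y hy
      have hle : w ≤ sSup ((fun A => sSup {v | y ∈ t v A}) '' 𝒜) := by
        rw [sSup_image]
        exact biInf_le _ hy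
      apply hC1 w _ _ hle
      refine Set.mem_iInter₂.2 ?_
      rintro _ ⟨A, hA, rfl⟩
      exact hC0 _ _ _ (Set.subset_sUnion_of_mem hA) (attain A y)
    -- z ∈ t (w * u) (⋃₀ 𝒜)
    have hz : z ∈ t u B := attain B z
    have : z ∈ t (w * u) (⋃₀ 𝒜) := hC3 u w _ (hC0 u _ _ hB hz)
    exact le_sSup this
end

section
/- The correspondence sending a V-closure space structure c : PX → V^X to its closure tower c^v A = {x | (cA)(x) ≥ v}, and the correspondence sending a closure tower (c^v) satisfying (C0)–(C3) to the structure (cA)(x) = ⨆{v | x ∈ c^v A}, are mutually inverse bijections. -/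
/-- A closure tower: a family `(c^v : PX → PX)` satisfying (C0)-(C3). -/
def IsClosureTower {V : Type*} [CompleteLattice V] [Monoid V] (X : Type*)
    (t : V → Set X → Set X) : Prop :=
  (∀ (v : V) (A B : Set X), B ⊆ A → t v B ⊆ t v A) ∧
  (∀ (v : V) (U : Set V) (A : Set X), v ≤ sSup U → (⋂ u ∈ U, t u A) ⊆ t v A) ∧
  (∀ A : Set X, A ⊆ t 1 A) ∧
  (∀ (u v : V) (A : Set X), t u (t v A) ⊆ t (v * u) A)

open IsQuantale

/-- Reflexivity extension: for `y ∈ A`, `1 ≤ c A y`. -/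
lemma vcls_one_le {V : Type*} [CompleteLattice V] [Monoid V] [IsQuantale V] {X : Type*}
    {c : Set X → X → V} (hc : IsVCls X c) {A : Set X} {y : X} (hy : y ∈ A) :
    (1 : V) ≤ c A y := by
  obtain ⟨hR, hT⟩ := hc
  have h := hT {s : Set X | ∃ a ∈ A, s = {a}} {y} y
  have hU : ⋃₀ {s : Set X | ∃ a ∈ A, s = {a}} = A := by
    ext x
    constructor
    · rintro ⟨s, ⟨a, ha, rfl⟩, hx⟩; simpa using hx ▸ ha
    · intro hx; exact ⟨{x}, ⟨x, hx, rfl⟩, rfl⟩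
  rw [hU] at h
  refine le_trans ?_ h
  have h1 : (1 : V) ≤ ⨅ y' ∈ ({y} : Set X), ⨆ A' ∈ {s : Set X | ∃ a ∈ A, s = {a}}, c A' y' := by
    refine le_iInf fun y' => le_iInf fun hy' => ?_
    rcases hy' with rfl
    exact le_trans (hR y') (le_iSup₂ (f := fun A' _ => c A' y') {y'} ⟨y', hy, rfl⟩)
  calc (1 : V) = 1 * 1 := (one_mul 1).symm
    _ ≤ _ := mul_le_mul' h1 (hR y)

/-- Monotonicity of a V-closure structure. -/
lemma vcls_mono {V : Type*} [CompleteLattice V] [Monoid V] [IsQuantale V] {X : Type*}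
    {c : Set X → X → V} (hc : IsVCls X c) {A B : Set X} (hBA : B ⊆ A) (z : X) :
    c B z ≤ c A z := by
  have h := hc.2 {A} B z
  rw [Set.sUnion_singleton] at h
  refine le_trans ?_ h
  have h1 : (1 : V) ≤ ⨅ y ∈ B, ⨆ A' ∈ ({A} : Set (Set X)), c A' y := by
    refine le_iInf fun y => le_iInf fun hy => ?_
    exact le_trans (vcls_one_le hc (hBA hy))
      (le_iSup₂ (f := fun A' _ => c A' y) A (Set.mem_singleton A))
  calc c B z = 1 * c B z := (one_mul _).symm
    _ ≤ _ := mul_le_mul' h1 le_rfl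

/-- Key: for a tower, `v ≤ sSup {u | x ∈ t u A} ↔ x ∈ t v A`. -/
lemma tower_le_iff {V : Type*} [CompleteLattice V] [Monoid V] {X : Type*}
    {t : V → Set X → Set X} (ht : IsClosureTower X t) (v : V) (A : Set X) (x : X) :
    v ≤ sSup {u : V | x ∈ t u A} ↔ x ∈ t v A := by
  constructor
  · intro h
    exact ht.2.1 v _ A h (Set.mem_iInter₂.mpr fun u hu => hu)
  · intro h
    exact le_sSup h

/-- The correspondences `c ↦ (c^v)` with `c^v A = {x | v ≤ (cA)(x)}` and
`(c^v) ↦ c` with `(cA)(x) = ⨆{v | x ∈ c^v A}` are mutually inverse bijections between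
`V`-closure space structures and closure towers on `X`. -/
theorem closure_tower_bijection {V : Type*} [CompleteLattice V] [Monoid V] [IsQuantale V]
    {X : Type*} :
    (∀ c : Set X → X → V, IsVCls X c →
      IsClosureTower X (fun v A => {x | v ≤ c A x}) ∧
      ∀ (A : Set X) (x : X), sSup {v : V | x ∈ {x | v ≤ c A x}} = c A x) ∧
    (∀ t : V → Set X → Set X, IsClosureTower X t →
      IsVCls X (fun A x => sSup {v : V | x ∈ t v A}) ∧
      ∀ (v : V) (A : Set X), {x | v ≤ sSup {u : V | x ∈ t u A}} = t v A) := by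
  constructor
  · intro c hc
    refine ⟨⟨?_, ?_, ?_, ?_⟩, ?_⟩
    · intro v A B hBA x hx
      exact le_trans hx (vcls_mono hc hBA x)
    · intro v U A hv x hx
      simp only [Set.mem_iInter, Set.mem_setOf_eq] at hx ⊢
      exact le_trans hv (sSup_le fun u hu => hx u hu)
    · intro A x hx
      exact vcls_one_le hc hx
    · intro u v A x hx
      simp only [Set.mem_setOf_eq] at hx ⊢
      set B : Set X := {y | v ≤ c A y} with hB
      have h := hc.2 {A} B x
      rw [Set.sUnion_singleton] at h
      refine le_trans ?_ h
      have h1 : v ≤ ⨅ y ∈ B, ⨆ A' ∈ ({A} : Set (Set X)), c A' y := by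
        refine le_iInf fun y => le_iInf fun hy => ?_
        exact le_trans hy (le_iSup₂ (f := fun A' _ => c A' y) A (Set.mem_singleton A))
      exact mul_le_mul' h1 hx
    · intro A x
      apply le_antisymm
      · exact sSup_le fun v hv => hv
      · exact le_sSup (le_refl (c A x))
  · intro t ht
    refine ⟨⟨?_, ?_⟩, ?_⟩
    · intro x
      exact le_sSup (ht.2.2.1 {x} rfl)
    · intro 𝒜 B z
      set c : Set X → X → V := fun A x => sSup {v : V | x ∈ t v A} with hcdef
      set w : V := ⨅ y ∈ B, ⨆ A ∈ 𝒜, c A y with hw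
      -- B ⊆ t w (⋃₀ 𝒜)
      have hBsub : B ⊆ t w (⋃₀ 𝒜) := by
        intro y hy
        rw [← tower_le_iff ht]
        refine le_trans (iInf₂_le y hy) (iSup₂_le fun A hA => ?_)
        refine sSup_le fun u hu => ?_
        exact le_sSup (ht.1 u _ _ (Set.subset_sUnion_of_mem hA) hu)
      have key : ∀ v : V, z ∈ t v B → w * v ≤ c (⋃₀ 𝒜) z := by
        intro v hv
        have h1 : z ∈ t v (t w (⋃₀ 𝒜)) := ht.1 v _ _ hBsub hv
        have h2 : z ∈ t (w * v) (⋃₀ 𝒜) := ht.2.2.2 v w (⋃₀ 𝒜) h1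
        exact le_sSup h2
      calc w * c B z = w * sSup {v : V | z ∈ t v B} := rfl
        _ = ⨆ v ∈ {v : V | z ∈ t v B}, w * v := mul_sSup_distrib
        _ ≤ c (⋃₀ 𝒜) z := iSup₂_le fun v hv => key v hv
    · intro v A
      ext x
      simp only [Set.mem_setOf_eq]
      exact tower_le_iff ht v A x
end

section
/- Let V be a quantale, c : PX → V^X and (c^v)_{v∈V} corresponding to each other via c^v A = {x | (cA)(x) ≥ v} and (cA)(x) = ⨆{v | x ∈ c^v A}. Then the condition (C3) c^u(c^v A) ⊆ c^{v⊗u} A for all u, v ∈ V, A ⊆ X is equivalent to the condition (C3') v ⊗ c(c^v A)(x) ≤ (cA)(x) for all x ∈ X, A ⊆ X, v ∈ V. -/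
/-- Given `c : PX → V^X` and a family `(c^v)` related by
`c^v A = {x | v ≤ (cA)(x)}` and `(cA)(x) = ⨆{v | x ∈ c^v A}`, condition
(C3) `c^u(c^v A) ⊆ c^{v⊗u} A` is equivalent to (C3') `v ⊗ c(c^v A)(x) ≤ (cA)(x)`. -/
theorem C3_iff_C3' {V : Type*} [CompleteLattice V] [Monoid V] [IsQuantale V]
    {X : Type*} (c : Set X → X → V) (t : V → Set X → Set X)
    (h1 : ∀ (v : V) (A : Set X), t v A = {x | v ≤ c A x})
    (h2 : ∀ (A : Set X) (x : X), c A x = sSup {v : V | x ∈ t v A}) :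
    (∀ (u v : V) (A : Set X), t u (t v A) ⊆ t (v * u) A) ↔
    (∀ (x : X) (A : Set X) (v : V), v * c (t v A) x ≤ c A x) := by
  constructor
  · intro h x A v
    rw [h2 (t v A) x, IsQuantale.mul_sSup_distrib]
    apply iSup_le; intro u
    apply iSup_le; intro hu
    have := h u v A hu
    rw [h1] at this
    exact this
  · intro h u v A x hx
    rw [h1] at hx ⊢
    calc v * u ≤ v * c (t v A) x := mul_le_mul_right hx v
    _ ≤ c A x := h x A v
end

section
/- Let V be a constructively completely distributive quantale and (X, c) a V-closure space with closure tower (c^v). Then c preserves finite joins (i.e., (c∅)(x) = ⊥ and c(A∪B)(x) = (cA)(x) ∨ (cB)(x) for all x, A, B) if and only if for all v > ⊥: c^v ∅ = ∅ and c^v(A ∪ B) = ⋂_{u ≪ v} (c^u A ∪ c^u B), where ≪ is the totally-below relation. -/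
/-- `u` is totally below `v`. -/
def TotallyBelow {V : Type*} [CompleteLattice V] (u v : V) : Prop :=
  ∀ D : Set V, v ≤ sSup D → ∃ d ∈ D, u ≤ d

/-- For `V` constructively completely distributive, a `V`-closure space is
finite-join-preserving (a `V`-approach space) iff its closure tower satisfies (C4) and
(C5) for all `v > ⊥`. -/
theorem approach_iff_tower_C4_C5 {V : Type*} [CompleteLattice V] [Monoid V] [IsQuantale V]
    {X : Type*}
    (hccd : ∀ v : V, v = sSup {u | TotallyBelow u v})
    (c : Set X → X → V) (hc : IsVCls X c) :
    ((∀ x : X, c ∅ x = ⊥) ∧ ∀ (A B : Set X) (x : X), c (A ∪ B) x = c A x ⊔ c B x) ↔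
    ∀ v : V, ⊥ < v →
      ({x | v ≤ c ∅ x} = (∅ : Set X)) ∧
      ∀ A B : Set X,
        {x | v ≤ c (A ∪ B) x} =
          ⋂ u ∈ {u : V | TotallyBelow u v}, ({x | u ≤ c A x} ∪ {x | u ≤ c B x}) := by
  constructor
  · rintro ⟨h0, hsup⟩ v hv
    refine ⟨?_, ?_⟩
    · ext x
      simp only [Set.mem_setOf_eq, h0, Set.mem_empty_iff_false, iff_false]
      exact fun h => absurd h hv.not_ge
    · intro A B
      ext x
      simp only [Set.mem_setOf_eq, hsup, Set.mem_iInter, Set.mem_union]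
      constructor
      · intro h u hu
        obtain ⟨d, hd, hud⟩ := hu {c A x, c B x} (by simpa using h)
        rcases hd with rfl | rfl
        · exact Or.inl hud
        · exact Or.inr hud
      · intro h
        calc v = sSup {u | TotallyBelow u v} := hccd v
          _ ≤ c A x ⊔ c B x := sSup_le fun u hu =>
              (h u hu).elim le_sup_of_le_left le_sup_of_le_right
  · intro h
    constructor
    · intro x
      by_contra hne
      have hv : ⊥ < c ∅ x := bot_lt_iff_ne_bot.mpr hne
      have h1 := (h _ hv).1
      have hx : x ∈ {y | c ∅ x ≤ c ∅ y} := le_refl _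
      rw [h1] at hx
      exact hx
    · intro A B x
      apply le_antisymm
      · rcases eq_or_ne (c (A ∪ B) x) ⊥ with hb | hb
        · simp [hb]
        · have hv : ⊥ < c (A ∪ B) x := bot_lt_iff_ne_bot.mpr hb
          have h2 := (h _ hv).2 A B
          have hx : x ∈ {y | c (A ∪ B) x ≤ c (A ∪ B) y} := le_refl _
          rw [h2] at hx
          simp only [Set.mem_iInter, Set.mem_union, Set.mem_setOf_eq] at hx
          calc c (A ∪ B) x = sSup {u | TotallyBelow u (c (A ∪ B) x)} := hccd _
            _ ≤ c A x ⊔ c B x := sSup_le fun u hu =>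
                (hx u hu).elim le_sup_of_le_left le_sup_of_le_right
      · apply sup_le
        · rcases eq_or_ne (c A x) ⊥ with hb | hb
          · simp [hb]
          · have hv : ⊥ < c A x := bot_lt_iff_ne_bot.mpr hb
            have h2 := (h _ hv).2 A B
            have hx : x ∈ ⋂ u ∈ {u : V | TotallyBelow u (c A x)},
                ({y | u ≤ c A y} ∪ {y | u ≤ c B y}) := by
              simp only [Set.mem_iInter, Set.mem_union, Set.mem_setOf_eq]
              intro u hu
              obtain ⟨d, hd, hud⟩ := hu {c A x} (by simp)
              rcases hd with rfl
              exact Or.inl hud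
            rw [← h2] at hx
            exact hx
        · rcases eq_or_ne (c B x) ⊥ with hb | hb
          · simp [hb]
          · have hv : ⊥ < c B x := bot_lt_iff_ne_bot.mpr hb
            have h2 := (h _ hv).2 A B
            have hx : x ∈ ⋂ u ∈ {u : V | TotallyBelow u (c B x)},
                ({y | u ≤ c A y} ∪ {y | u ≤ c B y}) := by
              simp only [Set.mem_iInter, Set.mem_union, Set.mem_setOf_eq]
              intro u hu
              obtain ⟨d, hd, hud⟩ := hu {c B x} (by simp)
              rcases hd with rfl
              exact Or.inr hud
            rw [← h2] at hx
            exact hx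
end

section
/- Every distance distribution function φ ∈ Δ admits the presentation φ = ⨆_{α ∈ (0,∞)} σ(α) ⊙ τ(φ(α)), where σ(α)(γ) = 0 if γ ≤ α and 1 otherwise, τ(u)(γ) = u if γ > 0 and 0 otherwise, and ⊙ is the convolution product (σ(α) ⊙ τ(u))(γ) = 0 if γ ≤ α, u if γ > α. -/
open scoped ENNReal

/-- Distance distribution functions: left-continuous `φ : [0,∞] → [0,1]`
(modelled as `ℝ≥0∞`-valued functions bounded by `1`). -/
def DDF : Type := {φ : ℝ≥0∞ → ℝ≥0∞ // (∀ γ, φ γ ≤ 1) ∧ ∀ β, φ β = ⨆ α < β, φ α}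

/-- Every `φ ∈ Δ` has the presentation
`φ = ⨆_{α ∈ (0,∞)} σ(α) ⊙ τ(φ(α))`, where `(σ(α) ⊙ τ(u))(γ) = 0` if `γ ≤ α`
and `u` if `γ > α`; the join is pointwise. -/
theorem DDF_presentation (φ : DDF) (γ : ℝ≥0∞) :
    φ.1 γ = ⨆ (α : ℝ≥0∞) (_ : 0 < α) (_ : α ≠ ⊤),
      (if γ ≤ α then 0 else φ.1 α) := by
  obtain ⟨f, hb, hl⟩ := φ
  simp only
  rw [hl γ]
  apply le_antisymm
  · refine iSup₂_le fun α hα => ?_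
    rcases eq_or_ne α 0 with rfl | h0
    · have : f 0 = 0 := by simp [hl 0]
      simp [this]
    · have hpos : 0 < α := pos_iff_ne_zero.mpr h0
      have htop : α ≠ ⊤ := hα.ne_top
      refine le_trans ?_ (le_iSup_of_le α (le_iSup_of_le hpos (le_iSup_of_le htop le_rfl)))
      rw [if_neg (not_le.mpr hα)]
  · refine iSup_le fun α => iSup_le fun _ => iSup_le fun _ => ?_
    by_cases h : γ ≤ α
    · simp [h]
    · rw [if_neg h]
      exact le_iSup₂ (f := fun α (_ : α < γ) => f α) α (not_le.mp h)
end

section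
/- Let V be a completely distributive quantale and (X, c) a map c : PX → V^X preserving finite joins in the first argument (c∅ = ⊥ pointwise and c(A∪B) = cA ∨ cB pointwise) and satisfying the V-closure-space axioms. Then for all A ⊆ X and x ∈ X: (cA)(x) = ⨆_{𝔵 ultrafilter on X, A ∈ 𝔵} ⨅_{B ∈ 𝔵} (cB)(x). That is, the point-set distance is recovered from the induced ultrafilter structure ℓ_c(𝔵)(x) = ⨅_{B∈𝔵}(cB)(x) via (c_{ℓ_c}A)(x) = ⨆_{𝔵 ∋ A} (ℓ_c𝔵)(x). -/
/-- `p` is a coprime element of the complete lattice `V`. -/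
def CoprimeElem {V : Type*} [CompleteLattice V] (p : V) : Prop :=
  ⊥ < p ∧ ∀ u v : V, p ≤ u ⊔ v → p ≤ u ∨ p ≤ v

/-!
Given a coprime `p ≤ (cA)(x)`, the sets `S` with `p ≰ (cSᶜ)(x)` form a filter, since
coprimality makes `{B | p ≰ (cB)(x)}` closed under finite unions. This filter is compatible
with `A`, and any ultrafilter refining both contains only sets `B` with `p ≤ (cB)(x)`. Writing
`(cA)(x)` as the join of such `p` gives `≤`; the reverse inequality is immediate.
-/

theorem CoprimeElem.supPrime {V : Type*} [CompleteLattice V] {p : V} (hp : CoprimeElem p) :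
    SupPrime p :=
  ⟨not_isMin_iff_ne_bot.mpr hp.1.ne', fun u v h => hp.2 u v h⟩

namespace SupBotHom

variable {X V : Type*} [CompleteLattice V] (φ : SupBotHom (Set X) V) {p : V}

def filterOfSupPrime (hp : SupPrime p) : Filter X where
  sets := {S | ¬ p ≤ φ Sᶜ}
  univ_sets := by simpa [Set.compl_univ, ← Set.bot_eq_empty] using hp.ne_bot
  sets_of_superset {S T} hS hST hT :=
    hS (hT.trans (OrderHomClass.mono φ (Set.compl_subset_compl.mpr hST)))
  inter_sets {S T} hS hT h := by
    rw [Set.compl_inter] at h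
    exact (hp.le_sup.mp (h.trans_eq (map_sup φ Sᶜ Tᶜ))).elim hS hT

theorem exists_ultrafilter_le_iInf (hp : SupPrime p) {A : Set X} (hA : p ≤ φ A) :
    ∃ F : Ultrafilter X, A ∈ F ∧ p ≤ ⨅ B ∈ F, φ B := by
  have hne : (φ.filterOfSupPrime hp ⊓ Filter.principal A).NeBot := by
    refine Filter.inf_principal_neBot_iff.mpr fun S hS => ?_
    by_contra hdisj
    have hAS : A ⊆ Sᶜ := fun a ha hs => hdisj ⟨a, hs, ha⟩
    exact hS (hA.trans (OrderHomClass.mono φ hAS))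
  set F := Ultrafilter.of (φ.filterOfSupPrime hp ⊓ Filter.principal A)
  have hF : ↑F ≤ φ.filterOfSupPrime hp ⊓ Filter.principal A := Ultrafilter.of_le _
  refine ⟨F, Filter.le_principal_iff.mp (hF.trans inf_le_right), le_iInf₂ fun B hB => ?_⟩
  by_contra hpB
  have hBc : Bᶜ ∈ F := (hF.trans inf_le_left) (show ¬ p ≤ φ Bᶜᶜ by rwa [compl_compl])
  exact Ultrafilter.compl_notMem_iff.mpr hB hBc

theorem eq_iSup_ultrafilter_iInf (hcd : ∀ v : V, v = sSup {p : V | p ≤ v ∧ CoprimeElem p})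
    (A : Set X) : φ A = ⨆ (F : Ultrafilter X) (_ : A ∈ F), ⨅ B ∈ F, φ B := by
  refine le_antisymm ?_ (iSup₂_le fun F hA => iInf₂_le A hA)
  rw [hcd (φ A)]
  refine sSup_le fun p ⟨hpA, hp⟩ => ?_
  obtain ⟨F, hAF, hpF⟩ := φ.exists_ultrafilter_le_iInf hp.supPrime hpA
  exact le_iSup₂_of_le F hAF hpF

end SupBotHom

theorem approach_recovered_from_ultrafilters_general {V : Type*}
    [CompleteLattice V] {X : Type*}
    (hcd : ∀ v : V, v = sSup {p : V | p ≤ v ∧ CoprimeElem p})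
    (c : Set X → X → V)
    (hbot : ∀ x : X, c ∅ x = ⊥)
    (hjoin : ∀ (A B : Set X) (x : X), c (A ∪ B) x = c A x ⊔ c B x) :
    ∀ (A : Set X) (x : X),
      c A x = ⨆ (F : Ultrafilter X) (_ : A ∈ F), ⨅ B ∈ F, c B x := fun A x =>
  (SupBotHom.mk ⟨(c · x), (hjoin · · x)⟩ (hbot x)).eq_iSup_ultrafilter_iInf hcd A

/-- For a completely distributive quantale `V` (every element a join of
coprimes) and a finite-join-preserving `V`-closure space structure `c` on `X`
(a `V`-approach space), the point-set distance is recovered from ultrafilter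
convergence: `(cA)(x) = ⨆_{𝔵 ∋ A} ⨅_{B ∈ 𝔵} (cB)(x)`. -/
theorem approach_recovered_from_ultrafilters {V : Type*}
    [CompleteLattice V] [Monoid V] [IsQuantale V] {X : Type*}
    (hcd : ∀ v : V, v = sSup {p : V | p ≤ v ∧ CoprimeElem p})
    (c : Set X → X → V)
    (hR : ∀ x : X, (1 : V) ≤ c {x} x)
    (hT : ∀ (𝒜 : Set (Set X)) (B : Set X) (z : X),
      (⨅ y ∈ B, ⨆ A ∈ 𝒜, c A y) * c B z ≤ c (⋃₀ 𝒜) z)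
    (hbot : ∀ x : X, c ∅ x = ⊥)
    (hjoin : ∀ (A B : Set X) (x : X), c (A ∪ B) x = c A x ⊔ c B x) :
    ∀ (A : Set X) (x : X),
      c A x = ⨆ (F : Ultrafilter X) (_ : A ∈ F), ⨅ B ∈ F, c B x :=
  approach_recovered_from_ultrafilters_general hcd c hbot hjoin
end

section
/- Let p be a coprime element of a complete lattice V, X a set, c : PX → V^X a finite-join-preserving map (c(A∪B)(x) = (cA)(x) ∨ (cB)(x) and (c∅)(x) = ⊥), A ⊆ X and x ∈ X with p ≤ (cA)(x). Then there exists an ultrafilter 𝔵 on X with A ∈ 𝔵 such that p ≤ (cB)(x) for every B ∈ 𝔵. -/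
/-- If `p` is a coprime element of a complete lattice `V`,
`c : PX → V^X` preserves finite joins, and `p ≤ (cA)(x)`, then there is an
ultrafilter `𝔵` containing `A` with `p ≤ (cB)(x)` for all `B ∈ 𝔵`. -/
theorem exists_ultrafilter_of_coprime_le {V : Type*} [CompleteLattice V] {X : Type*}
    (p : V) (hp : ⊥ < p) (hcop : ∀ u v : V, p ≤ u ⊔ v → p ≤ u ∨ p ≤ v)
    (c : Set X → X → V)
    (hbot : ∀ x : X, c ∅ x = ⊥)
    (hjoin : ∀ (A B : Set X) (x : X), c (A ∪ B) x = c A x ⊔ c B x)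
    (A : Set X) (x : X) (hpA : p ≤ c A x) :
    ∃ F : Ultrafilter X, A ∈ F ∧ ∀ B ∈ F, p ≤ c B x := by
  -- monotonicity of `c` in the set argument
  have hmono : ∀ B B' : Set X, B ⊆ B' → c B x ≤ c B' x := by
    intro B B' h
    have : B ∪ B' = B' := Set.union_eq_self_of_subset_left h
    calc c B x ≤ c B x ⊔ c B' x := le_sup_left
      _ = c (B ∪ B') x := (hjoin B B' x).symm
      _ = c B' x := by rw [this]
  -- the filter of sets containing `A \ B` for some `B` with `¬ p ≤ c B x`
  let F₀ : Filter X :=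
    { sets := {S | ∃ B : Set X, ¬ p ≤ c B x ∧ A \ B ⊆ S}
      univ_sets := ⟨∅, by simp [hbot, hp.ne']⟩
      sets_of_superset := fun ⟨B, hB, hsub⟩ hST => ⟨B, hB, hsub.trans hST⟩
      inter_sets := by
        rintro S T ⟨B₁, hB₁, h₁⟩ ⟨B₂, hB₂, h₂⟩
        refine ⟨B₁ ∪ B₂, ?_, ?_⟩
        · intro hle
          rw [hjoin] at hle
          rcases hcop _ _ hle with h | h
          · exact hB₁ h
          · exact hB₂ h
        · intro y hy
          exact ⟨h₁ ⟨hy.1, fun h => hy.2 (Or.inl h)⟩, h₂ ⟨hy.1, fun h => hy.2 (Or.inr h)⟩⟩ }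
  have hne : F₀.NeBot := by
    refine ⟨fun h => ?_⟩
    have : (∅ : Set X) ∈ F₀ := by rw [h]; exact Filter.mem_bot
    obtain ⟨B, hB, hsub⟩ := this
    have hAB : A ⊆ B := fun y hy => by
      by_contra hb; exact (hsub ⟨hy, hb⟩)
    exact hB (hpA.trans (hmono A B hAB))
  obtain ⟨U, hU⟩ := Ultrafilter.exists_le F₀
  refine ⟨U, ?_, ?_⟩
  · exact hU ⟨∅, by simp [hbot, hp.ne'], by simp⟩
  · intro B hB
    by_contra hle
    have hc : Bᶜ ∈ U := hU ⟨B, hle, fun y hy => hy.2⟩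
    exact absurd (U.toFilter.inter_sets hB hc) (by simp)
end
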